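/- Let {X_n} be Banach spaces and U a free ultrafilter on ℕ. Then n(∏_U X_n) ≤ lim_U n(X_n), where n denotes the numerical index. -/

import Mathlib

open Filter Metric ENNReal

noncomputable def nradius {E : Type*} [SeminormedAddCommGroup E] [NormedSpace ℝ E]
    (T : E →L[ℝ] E) : ℝ :=
  sSup {r : ℝ | ∃ (x : E) (f : E →L[ℝ] ℝ), ‖x‖ = 1 ∧ ‖f‖ = 1 ∧ f x = 1 ∧ r = |f (T x)|}

noncomputable def nindex (E : Type*) [SeminormedAddCommGroup E] [NormedSpace ℝ E] : ℝ :=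
  sInf {r : ℝ | ∃ T : E →L[ℝ] E, ‖T‖ = 1 ∧ r = nradius T}

noncomputable def nullIdeal (X : ℕ → Type*) [∀ n, NormedAddCommGroup (X n)]
    [∀ n, NormedSpace ℝ (X n)] (U : Ultrafilter ℕ) : Submodule ℝ (lp X ∞) where
  carrier := {f | Tendsto (fun n => ‖f n‖) (U : Filter ℕ) (nhds 0)}
  zero_mem' := by
    simpa using (tendsto_const_nhds : Tendsto (fun _ : ℕ => (0 : ℝ)) (U : Filter ℕ) (nhds 0))
  add_mem' := by
    intro f g hf hg
    have h := hf.add hg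
    rw [add_zero] at h
    refine squeeze_zero (fun n => norm_nonneg _) (fun n => ?_) h
    simpa using norm_add_le (f n) (g n)
  smul_mem' := by
    intro c f hf
    have h := hf.const_mul ‖c‖
    rw [mul_zero] at h
    refine squeeze_zero (fun n => norm_nonneg _) (fun n => ?_) h
    simp [norm_smul]

/-!
A state `(x, f)` of the ultraproduct need not be an ultraproduct of states, so the numerical
radius of `(Tₙ)_U` is controlled through norms, which do pass to the ultraproduct. In any normed
space, `v(T) < 1` forces `‖1 + T‖ ≤ (1 + ‖T‖²) / (1 - v(T))`; conversely, every state gives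
`1 + s f(T x) ≤ ‖1 + s T‖`. Comparing the two for `(Tₙ)_U` and letting `s → 0±` yields
`v((Tₙ)_U) ≤ lim_U v(Tₙ)`. Applied to norm-one `Tₙ` with nearly minimal numerical radius, this
bounds `n(∏_U Xₙ)` by `lim_U n(Xₙ)`.
-/

open Topology

section NumericalRadius

variable {E : Type*} [SeminormedAddCommGroup E] [NormedSpace ℝ E]

lemma abs_apply_apply_le_norm (T : E →L[ℝ] E) {x : E} {f : E →L[ℝ] ℝ} (hx : ‖x‖ = 1)
    (hf : ‖f‖ = 1) : |f (T x)| ≤ ‖T‖ := by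
  simpa [hf] using f.le_of_opNorm_le_of_le hf.le (T.le_of_opNorm_le_of_le le_rfl hx.le)

lemma nradius_bddAbove (T : E →L[ℝ] E) :
    BddAbove {r : ℝ | ∃ (x : E) (f : E →L[ℝ] ℝ), ‖x‖ = 1 ∧ ‖f‖ = 1 ∧ f x = 1 ∧ r = |f (T x)|} :=
  ⟨‖T‖, by rintro _ ⟨x, f, hx, hf, -, rfl⟩; exact abs_apply_apply_le_norm T hx hf⟩

lemma abs_apply_le_nradius (T : E →L[ℝ] E) {x : E} {f : E →L[ℝ] ℝ} (hx : ‖x‖ = 1)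
    (hf : ‖f‖ = 1) (hfx : f x = 1) : |f (T x)| ≤ nradius T :=
  le_csSup (nradius_bddAbove T) ⟨x, f, hx, hf, hfx, rfl⟩

lemma nradius_le_of_forall (T : E →L[ℝ] E) {c : ℝ} (hc : 0 ≤ c)
    (h : ∀ (x : E) (f : E →L[ℝ] ℝ), ‖x‖ = 1 → ‖f‖ = 1 → f x = 1 → |f (T x)| ≤ c) :
    nradius T ≤ c :=
  Real.sSup_le (by rintro _ ⟨x, f, hx, hf, hfx, rfl⟩; exact h x f hx hf hfx) hc

lemma nradius_nonneg (T : E →L[ℝ] E) : 0 ≤ nradius T :=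
  Real.sSup_nonneg (by rintro _ ⟨x, f, -, -, -, rfl⟩; exact abs_nonneg _)

lemma nradius_le_norm (T : E →L[ℝ] E) : nradius T ≤ ‖T‖ :=
  nradius_le_of_forall T (norm_nonneg T) fun _ _ hx hf _ => abs_apply_apply_le_norm T hx hf

lemma nradius_smul_le (s : ℝ) (T : E →L[ℝ] E) : nradius (s • T) ≤ |s| * nradius T :=
  nradius_le_of_forall _ (mul_nonneg (abs_nonneg s) (nradius_nonneg T)) fun x f hx hf hfx => by
    rw [smul_apply, map_smul, smul_eq_mul, abs_mul]
    exact mul_le_mul_of_nonneg_left (abs_apply_le_nradius T hx hf hfx) (abs_nonneg s)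

lemma abs_apply_le_nradius_mul_norm (T : E →L[ℝ] E) {x : E} {f : E →L[ℝ] ℝ} (hf : ‖f‖ = 1)
    (hfx : f x = ‖x‖) : |f (T x)| ≤ nradius T * ‖x‖ := by
  rcases eq_or_ne ‖x‖ 0 with hx | hx
  · have hTx : ‖T x‖ = 0 := le_antisymm (by simpa [hx] using T.le_opNorm x) (norm_nonneg _)
    simpa [hx, hTx] using f.le_opNorm (T x)
  have hu : ‖‖x‖⁻¹ • x‖ = 1 := by rw [norm_smul, norm_inv, norm_norm, inv_mul_cancel₀ hx]
  have hfu : f (‖x‖⁻¹ • x) = 1 := by rw [map_smul, hfx, smul_eq_mul, inv_mul_cancel₀ hx]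
  have h := abs_apply_le_nradius T hu hf hfu
  rw [map_smul, map_smul, smul_eq_mul, abs_mul, abs_inv, abs_norm,
    inv_mul_le_iff₀ (lt_of_le_of_ne (norm_nonneg x) hx.symm)] at h
  linarith

lemma one_add_apply_le_norm_one_add (T : E →L[ℝ] E) {x : E} {f : E →L[ℝ] ℝ} (hx : ‖x‖ = 1)
    (hf : ‖f‖ = 1) (hfx : f x = 1) : 1 + f (T x) ≤ ‖1 + T‖ :=
  calc 1 + f (T x) = f ((1 + T) x) := by simp [hfx]
    _ ≤ |f ((1 + T) x)| := le_abs_self _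
    _ ≤ ‖1 + T‖ := abs_apply_apply_le_norm _ hx hf

lemma one_sub_nradius_mul_norm_le (T : E →L[ℝ] E) (x : E) :
    (1 - nradius T) * ‖x‖ ≤ ‖x - T x‖ := by
  rcases eq_or_ne ‖x‖ 0 with hx | hx
  · simp [hx]
  obtain ⟨f, hf, hfx⟩ := exists_dual_vector ℝ x hx
  replace hfx : f x = ‖x‖ := hfx
  calc (1 - nradius T) * ‖x‖ ≤ f x - f (T x) := by
        rw [hfx]; linarith [le_abs_self (f (T x)), abs_apply_le_nradius_mul_norm T hf hfx]
    _ = f (x - T x) := (map_sub f x (T x)).symm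
    _ ≤ ‖x - T x‖ := by simpa [hf] using le_trans (le_abs_self _) (f.le_opNorm (x - T x))

/-- Apply `one_sub_nradius_mul_norm_le` to `y = x + T x`, for which `y - T y = x - T (T x)`. -/
lemma norm_one_add_le (T : E →L[ℝ] E) (hT : nradius T < 1) :
    ‖1 + T‖ ≤ (1 + ‖T‖ ^ 2) / (1 - nradius T) := by
  have hpos : 0 < 1 - nradius T := sub_pos.2 hT
  refine ContinuousLinearMap.opNorm_le_bound _ (by positivity) fun x => ?_
  rw [div_mul_eq_mul_div, le_div_iff₀ hpos, mul_comm]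
  calc (1 - nradius T) * ‖(1 + T) x‖ ≤ ‖(1 + T) x - T ((1 + T) x)‖ :=
        one_sub_nradius_mul_norm_le T _
    _ = ‖x - (T * T) x‖ := by simp [sub_add_eq_sub_sub]
    _ ≤ ‖x‖ + ‖T * T‖ * ‖x‖ := (norm_sub_le _ _).trans (add_le_add le_rfl ((T * T).le_opNorm x))
    _ ≤ (1 + ‖T‖ ^ 2) * ‖x‖ := by
        nlinarith [norm_mul_le T T, norm_nonneg x]

end NumericalRadius

section NumericalIndex

lemma nindex_nonneg (E : Type*) [SeminormedAddCommGroup E] [NormedSpace ℝ E] : 0 ≤ nindex E :=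
  Real.sInf_nonneg (by rintro _ ⟨T, -, rfl⟩; exact nradius_nonneg T)

lemma nindex_le_nradius {E : Type*} [SeminormedAddCommGroup E] [NormedSpace ℝ E]
    {T : E →L[ℝ] E} (hT : ‖T‖ = 1) : nindex E ≤ nradius T :=
  csInf_le ⟨0, by rintro _ ⟨S, -, rfl⟩; exact nradius_nonneg S⟩ ⟨T, hT, rfl⟩

lemma nindex_eq_zero_of_forall_norm_eq_zero {E : Type*} [SeminormedAddCommGroup E]
    [NormedSpace ℝ E] (h : ∀ x : E, ‖x‖ = 0) : nindex E = 0 := by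
  have hT : ∀ T : E →L[ℝ] E, ‖T‖ = 0 := fun T =>
    le_antisymm (T.opNorm_le_bound le_rfl fun x => by simp [h]) (norm_nonneg T)
  have : {r : ℝ | ∃ T : E →L[ℝ] E, ‖T‖ = 1 ∧ r = nradius T} = ∅ :=
    Set.eq_empty_of_forall_notMem fun _ ⟨T, hT1, _⟩ => by simp [hT T] at hT1
  rw [nindex, this, Real.sInf_empty]

lemma exists_nradius_lt_nindex_add (E : Type*) [NormedAddCommGroup E] [NormedSpace ℝ E]
    {δ : ℝ} (hδ : 0 < δ) :
    ∃ T : E →L[ℝ] E, ‖T‖ ≤ 1 ∧ (Nontrivial E → ‖T‖ = 1) ∧ nradius T < nindex E + δ := by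
  rcases subsingleton_or_nontrivial E with hE | hE
  · refine ⟨0, by simp, fun h => (not_nontrivial E h).elim, ?_⟩
    rw [nindex_eq_zero_of_forall_norm_eq_zero fun x => by simp [Subsingleton.elim x 0]]
    linarith [nradius_le_norm (0 : E →L[ℝ] E), norm_zero (E := E →L[ℝ] E)]
  obtain ⟨_, ⟨T, hT, rfl⟩, hlt⟩ :=
    Real.lt_sInf_add_pos (s := {r : ℝ | ∃ T : E →L[ℝ] E, ‖T‖ = 1 ∧ r = nradius T})
      ⟨_, 1, ContinuousLinearMap.norm_id, rfl⟩ hδ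
  exact ⟨T, hT.le, fun _ => hT, hlt⟩

end NumericalIndex

lemma le_of_forall_one_add_mul_le {a m K : ℝ}
    (h : ∀ t : ℝ, 0 < t → t * m < 1 → 1 + t * a ≤ (1 + t ^ 2 * K) / (1 - t * m)) : a ≤ m := by
  have hlim : Tendsto (fun t : ℝ => t * (K + a * m)) (𝓝[>] 0) (𝓝 0) := by
    have : Continuous fun t : ℝ => t * (K + a * m) := by fun_prop
    simpa using (this.tendsto 0).mono_left nhdsWithin_le_nhds
  have hsmall : ∀ᶠ t in 𝓝[>] (0 : ℝ), t * m < 1 := by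
    have : Continuous fun t : ℝ => t * m := by fun_prop
    exact ((this.tendsto 0).mono_left nhdsWithin_le_nhds).eventually_lt_const (by simp)
  refine sub_nonpos.1 (ge_of_tendsto hlim ?_)
  filter_upwards [self_mem_nhdsWithin, hsmall] with t (ht : 0 < t) htm
  have hpos : 0 < 1 - t * m := by linarith
  have := h t ht htm
  rw [le_div_iff₀ hpos] at this
  nlinarith

section Ultraproduct

variable {X : ℕ → Type*} [∀ n, NormedAddCommGroup (X n)] [∀ n, NormedSpace ℝ (X n)]
  (U : Ultrafilter ℕ)

local notation "𝒰" => lp X ∞ ⧸ nullIdeal X U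

lemma norm_mk_eq_of_tendsto {y : lp X ∞} {l : ℝ}
    (h : Tendsto (fun n => ‖y n‖) (U : Filter ℕ) (𝓝 l)) :
    ‖(Submodule.Quotient.mk y : 𝒰)‖ = l := by
  rw [show ‖(Submodule.Quotient.mk y : 𝒰)‖ = infDist y (nullIdeal X U) from
    QuotientAddGroup.norm_mk (S := (nullIdeal X U).toAddSubgroup) y]
  refine le_antisymm (le_of_forall_pos_le_add fun ε hε => ?_)
    ((le_infDist ⟨0, zero_mem _⟩).2 fun z (hz : Tendsto _ _ _) => ?_)
  · classical
    have hsmall : ∀ᶠ n in (U : Filter ℕ), ‖y n‖ < l + ε := h.eventually_lt_const (by linarith)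
    let z : lp X ∞ := ⟨fun n => if ‖y n‖ < l + ε then 0 else y n, memℓp_infty
      ⟨‖y‖, by
        rintro _ ⟨n, rfl⟩
        dsimp only
        split_ifs
        · simp
        · exact lp.norm_apply_le_norm ENNReal.top_ne_zero y n⟩⟩
    have hz : z ∈ nullIdeal X U := by
      refine tendsto_const_nhds.congr' (hsmall.mono fun n hn => ?_)
      simp [z, hn]
    refine (infDist_le_dist_of_mem hz).trans ?_
    rw [dist_eq_norm]
    have hl : 0 ≤ l := ge_of_tendsto' h fun n => norm_nonneg _
    refine lp.norm_le_of_forall_le (by linarith) fun n => ?_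
    rw [lp.coeFn_sub, Pi.sub_apply]
    by_cases hn : ‖y n‖ < l + ε
    · simpa [z, hn] using hn.le
    · simpa [z, hn] using by linarith
  · have hlim : Tendsto (fun n => ‖y n‖ - ‖z n‖) (U : Filter ℕ) (𝓝 l) := by
      simpa using h.sub hz
    refine le_of_tendsto' hlim fun n => ?_
    rw [dist_eq_norm]
    calc ‖y n‖ - ‖z n‖ ≤ ‖y n - z n‖ := norm_sub_norm_le _ _
      _ ≤ ‖y - z‖ := lp.norm_apply_le_norm ENNReal.top_ne_zero (y - z) n

lemma tendsto_norm_apply_norm_mk (y : lp X ∞) :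
    Tendsto (fun n => ‖y n‖) (U : Filter ℕ) (𝓝 ‖(Submodule.Quotient.mk y : 𝒰)‖) := by
  obtain ⟨l, -, hl⟩ :=
    (isCompact_Icc (a := 0) (b := ‖y‖)).ultrafilter_le_nhds (U.map fun n => ‖y n‖)
    (by
      rw [Ultrafilter.coe_map, le_principal_iff]
      exact mem_map.2 <| univ_mem' fun n =>
        ⟨norm_nonneg _, lp.norm_apply_le_norm ENNReal.top_ne_zero y n⟩)
  rw [Ultrafilter.coe_map] at hl
  rwa [norm_mk_eq_of_tendsto U hl]

lemma norm_eq_zero_of_eventually_subsingleton (h : ∀ᶠ n in (U : Filter ℕ), Subsingleton (X n))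
    (q : 𝒰) : ‖q‖ = 0 := by
  obtain ⟨y, rfl⟩ := Submodule.Quotient.mk_surjective _ q
  refine norm_mk_eq_of_tendsto U (tendsto_const_nhds.congr' (h.mono fun n hn => ?_))
  simp [Subsingleton.elim (y n) 0]

variable {C : ℝ} (T : ∀ n, X n →L[ℝ] X n) (hT : ∀ n, ‖T n‖ ≤ C)

def lpMap : lp X ∞ →ₗ[ℝ] lp X ∞ where
  toFun y := ⟨fun n => T n (y n), memℓp_infty ⟨C * ‖y‖, by
    rintro _ ⟨n, rfl⟩
    exact (T n).le_of_opNorm_le_of_le (hT n) (lp.norm_apply_le_norm ENNReal.top_ne_zero y n)⟩⟩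
  map_add' y z := lp.ext <| funext fun n => map_add (T n) (y n) (z n)
  map_smul' c y := lp.ext <| funext fun n => map_smul (T n) c (y n)

lemma nullIdeal_le_comap_lpMap : nullIdeal X U ≤ (nullIdeal X U).comap (lpMap T hT) :=
  fun y (hy : Tendsto _ _ _) => squeeze_zero (fun n => norm_nonneg _)
    (fun n => (T n).le_of_opNorm_le (hT n) (y n)) (by simpa using hy.const_mul C)

lemma norm_mk_lpMap_le {D : ℝ} (hD : ∀ᶠ n in (U : Filter ℕ), ‖T n‖ ≤ D) (y : lp X ∞) :
    ‖(Submodule.Quotient.mk (lpMap T hT y) : 𝒰)‖ ≤ D * ‖(Submodule.Quotient.mk y : 𝒰)‖ :=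
  le_of_tendsto_of_tendsto (tendsto_norm_apply_norm_mk U _)
    ((tendsto_norm_apply_norm_mk U y).const_mul D)
    (hD.mono fun n hn => (T n).le_of_opNorm_le hn (y n))

noncomputable def ultraMap : 𝒰 →L[ℝ] 𝒰 :=
  ((nullIdeal X U).mapQ (nullIdeal X U) (lpMap T hT) (nullIdeal_le_comap_lpMap U T hT)).mkContinuous
    C fun q => by
      obtain ⟨y, rfl⟩ := Submodule.Quotient.mk_surjective _ q
      exact norm_mk_lpMap_le U T hT (.of_forall hT) y

lemma ultraMap_mk (y : lp X ∞) :
    ultraMap U T hT (Submodule.Quotient.mk y) = Submodule.Quotient.mk (lpMap T hT y) := rfl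

lemma norm_ultraMap_le {D : ℝ} (hD0 : 0 ≤ D) (hD : ∀ᶠ n in (U : Filter ℕ), ‖T n‖ ≤ D) :
    ‖ultraMap U T hT‖ ≤ D :=
  (ultraMap U T hT).opNorm_le_bound hD0 fun q => by
    obtain ⟨y, rfl⟩ := Submodule.Quotient.mk_surjective _ q
    exact norm_mk_lpMap_le U T hT hD y

lemma le_norm_ultraMap {c : ℝ} (hc : ∀ᶠ n in (U : Filter ℕ), c ≤ ‖T n‖) :
    c ≤ ‖ultraMap U T hT‖ := by
  refine le_of_forall_pos_le_add fun δ hδ => ?_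
  choose x hx1 hx using fun n => (T n).exists_lt_apply_of_lt_opNorm (sub_lt_self ‖T n‖ hδ)
  let y : lp X ∞ := ⟨x, memℓp_infty ⟨1, by rintro _ ⟨n, rfl⟩; exact (hx1 n).le⟩⟩
  have hy : ‖(Submodule.Quotient.mk y : 𝒰)‖ ≤ 1 :=
    (Submodule.Quotient.norm_mk_le _ _).trans
      (lp.norm_le_of_forall_le zero_le_one fun n => (hx1 n).le)
  have hlow : c - δ ≤ ‖ultraMap U T hT (Submodule.Quotient.mk y)‖ :=
    ge_of_tendsto (tendsto_norm_apply_norm_mk U (lpMap T hT y))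
      (hc.mono fun n hn => show c - δ ≤ ‖T n (x n)‖ by linarith [hx n])
  nlinarith [(ultraMap U T hT).le_opNorm (Submodule.Quotient.mk y), norm_nonneg (ultraMap U T hT)]

lemma norm_ultraMap_eq {c : ℝ} (hc0 : 0 ≤ c) (hc : ∀ᶠ n in (U : Filter ℕ), ‖T n‖ = c) :
    ‖ultraMap U T hT‖ = c :=
  le_antisymm (norm_ultraMap_le U T hT hc0 (hc.mono fun _ h => h.le))
    (le_norm_ultraMap U T hT (hc.mono fun _ h => h.ge))

lemma ultraMap_one_add_smul (s : ℝ) {C' : ℝ} (hS : ∀ n, ‖1 + s • T n‖ ≤ C') :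
    ultraMap U (fun n => 1 + s • T n) hS = 1 + s • ultraMap U T hT := by
  refine ContinuousLinearMap.ext fun q => ?_
  obtain ⟨y, rfl⟩ := Submodule.Quotient.mk_surjective _ q
  rw [ultraMap_mk, add_apply, smul_apply, one_apply_eq_self, ultraMap_mk,
    ← Submodule.Quotient.mk_smul, ← Submodule.Quotient.mk_add]
  congr 1

lemma norm_one_add_smul_ultraMap_le {m : ℝ} (hm : ∀ᶠ n in (U : Filter ℕ), nradius (T n) ≤ m)
    {s : ℝ} (hs : |s| * m < 1) :
    ‖1 + s • ultraMap U T hT‖ ≤ (1 + s ^ 2 * C ^ 2) / (1 - |s| * m) := by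
  have hbound : ∀ n, ‖1 + s • T n‖ ≤ 1 + |s| * C := fun n =>
    (norm_add_le _ _).trans (add_le_add ContinuousLinearMap.norm_id_le
      ((norm_smul_le s (T n)).trans
        (by simpa using mul_le_mul_of_nonneg_left (hT n) (abs_nonneg s))))
  rw [← ultraMap_one_add_smul U T hT s hbound]
  refine norm_ultraMap_le U _ hbound (div_nonneg (by positivity) (by linarith))
    (hm.mono fun n hn => ?_)
  have hrad : nradius (s • T n) ≤ |s| * m :=
    (nradius_smul_le s (T n)).trans (mul_le_mul_of_nonneg_left hn (abs_nonneg s))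
  have hnorm : ‖s • T n‖ ^ 2 ≤ s ^ 2 * C ^ 2 := by
    rw [norm_smul, mul_pow, Real.norm_eq_abs, sq_abs]
    exact mul_le_mul_of_nonneg_left (pow_le_pow_left₀ (norm_nonneg _) (hT n) 2) (sq_nonneg s)
  calc ‖1 + s • T n‖ ≤ (1 + ‖s • T n‖ ^ 2) / (1 - nradius (s • T n)) :=
        norm_one_add_le _ (hrad.trans_lt hs)
    _ ≤ (1 + s ^ 2 * C ^ 2) / (1 - |s| * m) := by gcongr

lemma nradius_ultraMap_le {m : ℝ} (hm : ∀ᶠ n in (U : Filter ℕ), nradius (T n) ≤ m) :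
    nradius (ultraMap U T hT : 𝒰 →L[ℝ] 𝒰) ≤ m := by
  obtain ⟨n, hn⟩ := hm.exists
  refine nradius_le_of_forall _ ((nradius_nonneg _).trans hn) fun q f hq hf hfq => ?_
  have key : ∀ s : ℝ, |s| * m < 1 →
      1 + s * f (ultraMap U T hT q) ≤ (1 + s ^ 2 * C ^ 2) / (1 - |s| * m) := fun s hs =>
    calc 1 + s * f (ultraMap U T hT q) = 1 + f ((s • ultraMap U T hT) q) := by simp
      _ ≤ ‖1 + s • ultraMap U T hT‖ := one_add_apply_le_norm_one_add _ hq hf hfq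
      _ ≤ _ := norm_one_add_smul_ultraMap_le U T hT hm hs
  refine abs_le.2 ⟨neg_le.1 (le_of_forall_one_add_mul_le (K := C ^ 2) fun t ht htm => ?_),
    le_of_forall_one_add_mul_le (K := C ^ 2) fun t ht htm => ?_⟩
  · simpa [abs_of_pos ht] using key (-t) (by rwa [abs_neg, abs_of_pos ht])
  · simpa [abs_of_pos ht] using key t (by rwa [abs_of_pos ht])

end Ultraproduct

theorem ultraproduct_nindex_le_general
    (X : ℕ → Type*) [∀ n, NormedAddCommGroup (X n)] [∀ n, NormedSpace ℝ (X n)]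
    (U : Ultrafilter ℕ)
    (L : ℝ) (hL : Tendsto (fun n => nindex (X n)) (U : Filter ℕ) (nhds L)) :
    nindex (lp X ∞ ⧸ nullIdeal X U) ≤ L := by
  by_cases hX : ∀ᶠ n in (U : Filter ℕ), Nontrivial (X n)
  swap
  · have hsub : ∀ᶠ n in (U : Filter ℕ), Subsingleton (X n) :=
      Ultrafilter.eventually_not.2 hX |>.mono fun n => not_nontrivial_iff_subsingleton.1
    rw [nindex_eq_zero_of_forall_norm_eq_zero fun q =>
      norm_eq_zero_of_eventually_subsingleton U hsub q]
    exact ge_of_tendsto' hL fun n => nindex_nonneg (X n)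
  refine le_of_forall_pos_le_add fun δ hδ => ?_
  choose T hT1 hTnorm hTrad using fun n => exists_nradius_lt_nindex_add (X n) (half_pos hδ)
  have hrad : ∀ᶠ n in (U : Filter ℕ), nradius (T n) ≤ L + δ :=
    (hL.eventually_lt_const (by linarith : L < L + δ / 2)) |>.mono fun n hn => by
      linarith [hTrad n]
  have hnorm : ‖ultraMap U T hT1‖ = 1 := norm_ultraMap_eq U T hT1 zero_le_one (hX.mono hTnorm)
  exact (nindex_le_nradius hnorm).trans (nradius_ultraMap_le U T hT1 hrad)

theorem ultraproduct_nindex_le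
    (X : ℕ → Type*) [∀ n, NormedAddCommGroup (X n)] [∀ n, NormedSpace ℝ (X n)]
    [∀ n, CompleteSpace (X n)]
    (U : Ultrafilter ℕ) (hU : (U : Filter ℕ) ≤ Filter.cofinite)
    (L : ℝ) (hL : Tendsto (fun n => nindex (X n)) (U : Filter ℕ) (nhds L)) :
    nindex (lp X ∞ ⧸ nullIdeal X U) ≤ L :=
  ultraproduct_nindex_le_general X U L hL
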